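/- The function y ↦ (1 − 16·f₂(y) − 256·f₂(y)³ + 256·f₂(y)⁴)⁻¹ (the 2-modular secrecy function of the Barnes–Wall lattice BW₁₆, whose theta series equals (θ₃(y)θ₃(2y))⁸·(1 − 16f₂ − 256f₂³ + 256f₂⁴)) attains a strict global maximum on (0, ∞) at y = 1/√2: for every y > 0 with y ≠ 1/√2, (1 − 16·f₂(y) − 256·f₂(y)³ + 256·f₂(y)⁴)⁻¹ < (1 − 16β − 256β³ + 256β⁴)⁻¹ where β = (3 − 2√2)/4. -/
import Mathlib


open Real Filter Set

/-- Jacobi theta function θ₂ at purely imaginary argument τ = iy. -/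
noncomputable def θ₂ (y : ℝ) : ℝ := ∑' n : ℤ, Real.exp (-Real.pi * ((n : ℝ) + 1/2)^2 * y)

/-- Jacobi theta function θ₃ at purely imaginary argument τ = iy. -/
noncomputable def θ₃ (y : ℝ) : ℝ := ∑' n : ℤ, Real.exp (-Real.pi * (n : ℝ)^2 * y)

/-- Jacobi theta function θ₄ at purely imaginary argument τ = iy. -/
noncomputable def θ₄ (y : ℝ) : ℝ := ∑' n : ℤ, (-1 : ℝ)^n * Real.exp (-Real.pi * (n : ℝ)^2 * y)

noncomputable def f₂ (y : ℝ) : ℝ := θ₂ (2*y)^2 * θ₄ y ^ 2 / (4 * θ₃ y ^ 2 * θ₃ (2*y)^2)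

noncomputable def β : ℝ := (3 - 2 * Real.sqrt 2) / 4

namespace BW16aux


lemma nat_le_sq (n : ℕ) : (n:ℝ) ≤ (n:ℝ)^2 := by
  have : n ≤ n^2 := by nlinarith [Nat.zero_le n]
  exact_mod_cast this

/-- summability of general gaussian-type series over ℤ -/
lemma summable_quad (y e : ℝ) (hy : 0 < y) (he0 : 0 ≤ e) (he1 : e ≤ 1/2) :
    Summable (fun n : ℤ => Real.exp (-Real.pi * ((n : ℝ) + e)^2 * y)) := by
  have hr1 : Real.exp (-Real.pi * y) < 1 := by
    rw [Real.exp_lt_one_iff]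
    nlinarith [Real.pi_pos]
  have hr0 : 0 ≤ Real.exp (-Real.pi * y) := (Real.exp_pos _).le
  have hgeom : Summable (fun n : ℕ => Real.exp (-Real.pi * y) ^ n) :=
    summable_geometric_of_lt_one hr0 hr1
  apply Summable.of_nat_of_neg_add_one
  · refine Summable.of_nonneg_of_le (fun n => (Real.exp_pos _).le) (fun n => ?_) hgeom
    rw [← Real.exp_nat_mul]
    apply Real.exp_le_exp.2
    push_cast
    have h2 : ((n:ℝ)) ≤ ((n:ℝ)+e)^2 := by nlinarith [nat_le_sq n, mul_nonneg he0 (Nat.cast_nonneg n : (0:ℝ) ≤ n), sq_nonneg e]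
    nlinarith [mul_le_mul_of_nonneg_left h2 (mul_pos Real.pi_pos hy).le]
  · refine Summable.of_nonneg_of_le (fun n => (Real.exp_pos _).le) (fun n => ?_) hgeom
    rw [← Real.exp_nat_mul]
    apply Real.exp_le_exp.2
    push_cast
    have h1 : ((n:ℝ)) ≤ ((-((n:ℝ)+1)) + e)^2 := by
      nlinarith [nat_le_sq n, mul_nonneg (by linarith : (0:ℝ) ≤ 1-e) (Nat.cast_nonneg n : (0:ℝ) ≤ n), sq_nonneg (1-e)]
    nlinarith [mul_le_mul_of_nonneg_left h1 (mul_pos Real.pi_pos hy).le]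

lemma summable3 (y : ℝ) (hy : 0 < y) :
    Summable (fun n : ℤ => Real.exp (-Real.pi * (n : ℝ)^2 * y)) := by
  simpa using summable_quad y 0 hy le_rfl (by norm_num)

lemma summable2 (y : ℝ) (hy : 0 < y) :
    Summable (fun n : ℤ => Real.exp (-Real.pi * ((n : ℝ) + 1/2)^2 * y)) :=
  summable_quad y (1/2) hy (by norm_num) le_rfl

lemma summable4 (y : ℝ) (hy : 0 < y) :
    Summable (fun n : ℤ => (-1:ℝ)^n * Real.exp (-Real.pi * (n : ℝ)^2 * y)) := by
  rw [← summable_abs_iff]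
  have : ∀ n : ℤ, |(-1:ℝ)^n * Real.exp (-Real.pi * (n : ℝ)^2 * y)|
      = Real.exp (-Real.pi * (n : ℝ)^2 * y) := by
    intro n
    rw [abs_mul, abs_of_pos (Real.exp_pos _)]
    rcases Int.even_or_odd n with h | h
    · rw [h.neg_one_zpow]; norm_num
    · rw [h.neg_one_zpow]; norm_num
  simpa only [this] using summable3 y hy

lemma theta3_pos (y : ℝ) (hy : 0 < y) : 0 < θ₃ y := by
  refine Summable.tsum_pos (summable3 y hy) (fun n => (Real.exp_pos _).le) 0 (Real.exp_pos _)

lemma theta2_pos (y : ℝ) (hy : 0 < y) : 0 < θ₂ y :=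
  Summable.tsum_pos (summable2 y hy) (fun n => (Real.exp_pos _).le) 0 (Real.exp_pos _)


lemma summableN (y : ℝ) (hy : 0 < y) :
    Summable (fun n : ℕ => Real.exp (-Real.pi * ((n:ℝ)+1)^2 * y)) := by
  have := (summable3 y hy).comp_injective (fun a b h => by simpa using h :
      Function.Injective (fun n:ℕ => ((n:ℤ)+1)))
  refine this.congr fun n => ?_
  simp only [Function.comp]
  push_cast
  ring_nf

lemma summableN4 (y : ℝ) (hy : 0 < y) :
    Summable (fun n : ℕ => (-1:ℝ)^n * Real.exp (-Real.pi * ((n:ℝ)+1)^2 * y)) := by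
  rw [← summable_abs_iff]
  refine (summableN y hy).congr fun n => ?_
  rw [abs_mul, abs_pow, abs_neg, abs_one, one_pow, one_mul, abs_of_pos (Real.exp_pos _)]

/-- bounds for alternating sums -/
lemma alt_bounds (c : ℕ → ℝ) (hs : Summable c) (hpos : ∀ n, 0 ≤ c n)
    (hdec : ∀ n, c (n+1) ≤ c n) :
    c 0 - c 1 ≤ ∑' n : ℕ, (-1:ℝ)^n * c n ∧ ∑' n : ℕ, (-1:ℝ)^n * c n ≤ c 0 := by
  set g : ℕ → ℝ := fun n => (-1:ℝ)^n * c n with hg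
  have hse : Summable (fun k : ℕ => c (2*k)) :=
    hs.comp_injective (fun a b h => by omega)
  have hso : Summable (fun k : ℕ => c (2*k+1)) :=
    hs.comp_injective (fun a b h => by omega)
  have hso2 : Summable (fun k : ℕ => c (2*k+2)) :=
    hs.comp_injective (fun a b h => by omega)
  have hge : ∀ k : ℕ, g (2*k) = c (2*k) := by
    intro k; rw [hg]; simp [pow_mul]
  have hgo : ∀ k : ℕ, g (2*k+1) = -c (2*k+1) := by
    intro k; rw [hg]; simp [pow_succ, pow_mul]
  have hsge : Summable (fun k : ℕ => g (2*k)) := by simpa only [hge] using hse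
  have hsgo : Summable (fun k : ℕ => g (2*k+1)) := by
    apply Summable.neg at hso; simpa only [hgo] using hso
  have hsplit : ∑' k:ℕ, g (2*k) + ∑' k:ℕ, g (2*k+1) = ∑' n:ℕ, g n :=
    tsum_even_add_odd hsge hsgo
  have he : ∑' k:ℕ, g (2*k) = ∑' k:ℕ, c (2*k) := tsum_congr hge
  have ho : ∑' k:ℕ, g (2*k+1) = -∑' k:ℕ, c (2*k+1) := by
    rw [tsum_congr hgo, tsum_neg]
  have hT : ∑' n:ℕ, g n = ∑' k:ℕ, c (2*k) - ∑' k:ℕ, c (2*k+1) := by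
    rw [← hsplit, he, ho]; ring
  constructor
  · rw [hT, ← Summable.tsum_sub hse hso]
    have h0 : c 0 - c 1 ≤ c (2*0) - c (2*0+1) := by norm_num
    refine h0.trans (Summable.le_tsum (hse.sub hso) 0 (fun j _ => ?_))
    linarith [hdec (2*j), hpos (2*j+1)]
  · rw [hT]
    have hA : ∑' k:ℕ, c (2*k) = c 0 + ∑' k:ℕ, c (2*(k+1)) := by
      rw [Summable.tsum_eq_zero_add hse]
    have hA2 : ∑' k:ℕ, c (2*(k+1)) = ∑' k:ℕ, c (2*k+2) := by
      apply tsum_congr; intro k; ring_nf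
    have hle : ∑' k:ℕ, c (2*k+2) - ∑' k:ℕ, c (2*k+1) ≤ 0 := by
      rw [← Summable.tsum_sub hso2 hso]
      apply tsum_nonpos
      intro k; have := hdec (2*k+1); linarith
    rw [hA, hA2]; linarith

lemma theta3_eq (y : ℝ) (hy : 0 < y) :
    θ₃ y = 1 + 2 * ∑' n : ℕ, Real.exp (-Real.pi * ((n:ℝ)+1)^2 * y) := by
  have hsum := summable3 y hy
  set f : ℤ → ℝ := fun n => Real.exp (-Real.pi * (n:ℝ)^2 * y) with hf
  have hnat : Summable (fun n : ℕ => f n) := hsum.comp_injective Nat.cast_injective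
  have hnat1 := summableN y hy
  have key : ∑' n:ℕ, (f n + f (-(n+1))) = ∑' n:ℤ, f n := tsum_nat_add_neg_add_one hsum
  have hfn : ∀ n : ℕ, f (-(n+1)) = Real.exp (-Real.pi * ((n:ℝ)+1)^2 * y) := by
    intro n; rw [hf]; push_cast; ring_nf
  have hfnn : ∀ n : ℕ, f n = Real.exp (-Real.pi * ((n:ℝ))^2 * y) := by
    intro n; rw [hf]; push_cast; ring_nf
  have hs2 : Summable (fun n:ℕ => f (-(n+1))) := by
    simpa only [hfn] using hnat1
  have hth : θ₃ y = ∑' n:ℕ, (f n + f (-(n+1))) := key.symm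
  rw [hth, Summable.tsum_add hnat hs2]
  have e1 : ∑' n:ℕ, f (-(n+1)) = ∑' n : ℕ, Real.exp (-Real.pi * ((n:ℝ)+1)^2 * y) :=
    tsum_congr hfn
  have e2 : ∑' n:ℕ, f n = 1 + ∑' n : ℕ, Real.exp (-Real.pi * ((n:ℝ)+1)^2 * y) := by
    rw [Summable.tsum_eq_zero_add hnat]
    congr 1
    · rw [hfnn 0]; norm_num
    · apply tsum_congr; intro n; rw [hfnn (n+1)]; push_cast; ring_nf
  rw [e1, e2]; ring

lemma theta4_eq (y : ℝ) (hy : 0 < y) :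
    θ₄ y = 1 - 2 * ∑' n : ℕ, (-1:ℝ)^n * Real.exp (-Real.pi * ((n:ℝ)+1)^2 * y) := by
  have hsum := summable4 y hy
  set f : ℤ → ℝ := fun n => (-1:ℝ)^n * Real.exp (-Real.pi * (n:ℝ)^2 * y) with hf
  have hnat : Summable (fun n : ℕ => f n) := hsum.comp_injective Nat.cast_injective
  have hnat1 := summableN4 y hy
  have key : ∑' n:ℕ, (f n + f (-(n+1))) = ∑' n:ℤ, f n := tsum_nat_add_neg_add_one hsum
  have hfn : ∀ n : ℕ, f (-(n+1)) = -((-1:ℝ)^n * Real.exp (-Real.pi * ((n:ℝ)+1)^2 * y)) := by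
    intro n; rw [hf]
    have h1 : ((-1:ℝ)^(-((n:ℤ)+1))) = (-1:ℝ)^((n:ℕ)+1) := by
      rw [zpow_neg, show ((n:ℤ)+1) = ((n+1:ℕ):ℤ) by push_cast; ring, zpow_natCast]
      rcases Nat.even_or_odd (n+1) with h | h
      · rw [h.neg_one_pow]; norm_num
      · rw [h.neg_one_pow]; norm_num
    have h2 : ((-((n:ℤ)+1):ℤ):ℝ)^2 = ((n:ℝ)+1)^2 := by push_cast; ring
    show (-1:ℝ)^(-((n:ℤ)+1)) * Real.exp (-Real.pi * ((-((n:ℤ)+1):ℤ):ℝ)^2 * y) = _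
    rw [h1, h2, pow_succ]; ring
  have hfnn : ∀ n : ℕ, f n = (-1:ℝ)^n * Real.exp (-Real.pi * ((n:ℝ))^2 * y) := by
    intro n; rw [hf]
    show (-1:ℝ)^((n:ℕ):ℤ) * Real.exp (-Real.pi * (((n:ℕ):ℤ):ℝ)^2 * y) = _
    rw [zpow_natCast]; push_cast; ring_nf
  have hs2 : Summable (fun n:ℕ => f (-(n+1))) := by
    rw [show (fun n:ℕ => f (-(n+1))) = (fun n:ℕ =>
      -((-1:ℝ)^n * Real.exp (-Real.pi * ((n:ℝ)+1)^2 * y))) from funext hfn]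
    exact hnat1.neg
  have hth : θ₄ y = ∑' n:ℕ, (f n + f (-(n+1))) := key.symm
  rw [hth, Summable.tsum_add hnat hs2]
  have e1 : ∑' n:ℕ, f (-(n+1)) = -∑' n : ℕ, (-1:ℝ)^n * Real.exp (-Real.pi * ((n:ℝ)+1)^2 * y) := by
    rw [tsum_congr hfn, tsum_neg]
  have e2 : ∑' n:ℕ, f n = 1 - ∑' n : ℕ, (-1:ℝ)^n * Real.exp (-Real.pi * ((n:ℝ)+1)^2 * y) := by
    rw [Summable.tsum_eq_zero_add hnat]
    have h0 : f ((0:ℕ):ℤ) = 1 := by rw [hfnn 0]; norm_num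
    have hstep : ∑' n:ℕ, f (((n+1:ℕ):ℤ)) = -∑' n : ℕ, (-1:ℝ)^n * Real.exp (-Real.pi * ((n:ℝ)+1)^2 * y) := by
      rw [← tsum_neg]
      apply tsum_congr; intro n
      rw [hfnn (n+1)]
      push_cast
      rw [pow_succ]
      ring_nf
    rw [h0, hstep]; ring
  rw [e1, e2]; ring


lemma exp_pow_mul (x : ℝ) (n : ℕ) : Real.exp x ^ n = Real.exp ((n:ℝ) * x) := by
  rw [← Real.exp_nat_mul]

lemma theta4_bounds (y : ℝ) (hy : 0 < y) :
    1 - 2*Real.exp (-Real.pi*y) ≤ θ₄ y ∧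
    θ₄ y ≤ 1 - 2*Real.exp (-Real.pi*y) + 2*Real.exp (-Real.pi*y)^4 := by
  set c : ℕ → ℝ := fun n => Real.exp (-Real.pi * ((n:ℝ)+1)^2 * y) with hc
  have hs : Summable c := summableN y hy
  have hpos : ∀ n, 0 ≤ c n := fun n => (Real.exp_pos _).le
  have hdec : ∀ n, c (n+1) ≤ c n := by
    intro n
    apply Real.exp_le_exp.2
    push_cast
    have h2 : ((n:ℝ)+1)^2 ≤ ((n:ℝ)+1+1)^2 := by nlinarith [(Nat.cast_nonneg n : (0:ℝ) ≤ n)]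
    nlinarith [mul_le_mul_of_nonneg_left h2 (mul_pos Real.pi_pos hy).le]
  obtain ⟨hlo, hhi⟩ := alt_bounds c hs hpos hdec
  have hc0 : c 0 = Real.exp (-Real.pi*y) := by rw [hc]; norm_num
  have hc1 : c 1 = Real.exp (-Real.pi*y)^4 := by
    rw [hc, exp_pow_mul]
    show Real.exp (-Real.pi * (((1:ℕ):ℝ)+1)^2 * y) = Real.exp ((4:ℕ) * (-Real.pi*y))
    congr 1
    push_cast
    ring
  rw [hc0, hc1] at hlo
  rw [hc0] at hhi
  have h4 := theta4_eq y hy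
  have hTT : ∑' n : ℕ, (-1:ℝ)^n * Real.exp (-Real.pi * ((n:ℝ)+1)^2 * y) = ∑' n : ℕ, (-1:ℝ)^n * c n := rfl
  rw [h4, hTT]
  constructor
  · linarith
  · linarith

lemma theta3_lower (y : ℝ) (hy : 0 < y) : 1 + 2*Real.exp (-Real.pi*y) ≤ θ₃ y := by
  rw [theta3_eq y hy]
  have hs := summableN y hy
  have h := Summable.le_tsum hs 0 (fun j _ => (Real.exp_pos _).le)
  have h0 : Real.exp (-Real.pi * ((0:ℕ)+1:ℝ)^2 * y) = Real.exp (-Real.pi*y) := by norm_num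
  rw [h0] at h
  linarith

lemma abs_theta4_le (y : ℝ) (hy : 0 < y) : |θ₄ y| ≤ θ₃ y := by
  rw [abs_le]
  constructor
  · have hneg : -θ₃ y = ∑' n : ℤ, -Real.exp (-Real.pi * (n:ℝ)^2 * y) := by
      rw [tsum_neg]
      rfl
    rw [hneg]
    apply Summable.tsum_le_tsum _ ((summable3 y hy).neg) (summable4 y hy)
    intro n
    rcases Int.even_or_odd n with h | h
    · rw [h.neg_one_zpow]; nlinarith [Real.exp_pos (-Real.pi * (n:ℝ)^2 * y)]
    · rw [h.neg_one_zpow]; nlinarith [Real.exp_pos (-Real.pi * (n:ℝ)^2 * y)]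
  · apply Summable.tsum_le_tsum _ (summable4 y hy) (summable3 y hy)
    intro n
    rcases Int.even_or_odd n with h | h
    · rw [h.neg_one_zpow]; nlinarith [Real.exp_pos (-Real.pi * (n:ℝ)^2 * y)]
    · rw [h.neg_one_zpow]; nlinarith [Real.exp_pos (-Real.pi * (n:ℝ)^2 * y)]

section dup

variable (y : ℝ)

/-- the two reindexing maps -/
def φm : ℤ × ℤ → ℤ × ℤ := fun p => (p.1 + p.2, p.1 - p.2)
def ψm : ℤ × ℤ → ℤ × ℤ := fun p => (p.1 + p.2 + 1, p.1 - p.2)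

lemma φm_inj : Function.Injective φm := by
  rintro ⟨a,b⟩ ⟨c,d⟩ h
  simp only [φm, Prod.mk.injEq] at h
  obtain ⟨h1,h2⟩ := h
  ext <;> omega

lemma ψm_inj : Function.Injective ψm := by
  rintro ⟨a,b⟩ ⟨c,d⟩ h
  simp only [ψm, Prod.mk.injEq] at h
  obtain ⟨h1,h2⟩ := h
  ext <;> omega

lemma compl_ranges : IsCompl (Set.range φm) (Set.range ψm) := by
  constructor
  · rw [disjoint_iff_inf_le]
    rintro ⟨m,n⟩ ⟨⟨⟨a,b⟩, h1⟩, ⟨⟨c,d⟩, h2⟩⟩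
    simp only [φm, ψm, Prod.mk.injEq] at h1 h2
    omega
  · rw [codisjoint_iff_le_sup]
    rintro ⟨m,n⟩ _
    rcases Int.even_or_odd (m+n) with ⟨k,hk⟩ | ⟨k,hk⟩
    · apply Set.mem_union_left
      exact ⟨(k, k-n), by simp only [φm, Prod.mk.injEq]; omega⟩
    · apply Set.mem_union_right
      exact ⟨(k, k-n), by simp only [ψm, Prod.mk.injEq]; omega⟩

set_option maxHeartbeats 1000000 in
lemma dup_identities (hy : 0 < y) :
    θ₃ y ^ 2 = θ₃ (2*y)^2 + θ₂ (2*y)^2 ∧ θ₄ y ^ 2 = θ₃ (2*y)^2 - θ₂ (2*y)^2 := by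
  have h2y : 0 < 2*y := by linarith
  set g3 : ℤ → ℝ := fun n => Real.exp (-Real.pi * (n:ℝ)^2 * y) with hg3
  set g4 : ℤ → ℝ := fun n => (-1:ℝ)^n * Real.exp (-Real.pi * (n:ℝ)^2 * y) with hg4
  set G3 : ℤ → ℝ := fun n => Real.exp (-Real.pi * (n:ℝ)^2 * (2*y)) with hG3
  set G2 : ℤ → ℝ := fun n => Real.exp (-Real.pi * ((n:ℝ)+1/2)^2 * (2*y)) with hG2
  have hs3 := summable3 y hy
  have hs4 := summable4 y hy
  have hS3 : Summable G3 := summable3 _ h2y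
  have hS2 : Summable G2 := summable2 _ h2y
  -- product summabilities
  have hP3 : Summable (fun p : ℤ×ℤ => g3 p.1 * g3 p.2) :=
    hs3.mul_of_nonneg hs3 (fun n => (Real.exp_pos _).le) (fun n => (Real.exp_pos _).le)
  have habs : ∀ n : ℤ, |g4 n| = g3 n := by
    intro n
    show |(-1:ℝ)^n * Real.exp (-Real.pi * (n:ℝ)^2 * y)| = Real.exp (-Real.pi * (n:ℝ)^2 * y)
    rw [abs_mul, abs_of_pos (Real.exp_pos _)]
    rcases Int.even_or_odd n with h | h
    · rw [h.neg_one_zpow]; norm_num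
    · rw [h.neg_one_zpow]; norm_num
  have hP4 : Summable (fun p : ℤ×ℤ => g4 p.1 * g4 p.2) := by
    rw [← summable_abs_iff]
    refine hP3.congr fun p => ?_
    exact (by rw [abs_mul, habs p.1, habs p.2] :
      |g4 p.1 * g4 p.2| = g3 p.1 * g3 p.2).symm
  -- HasSum of the full double sums
  have hF3 : HasSum (fun p : ℤ×ℤ => g3 p.1 * g3 p.2) (θ₃ y * θ₃ y) :=
    hs3.hasSum.mul hs3.hasSum hP3
  have hF4 : HasSum (fun p : ℤ×ℤ => g4 p.1 * g4 p.2) (θ₄ y * θ₄ y) :=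
    hs4.hasSum.mul hs4.hasSum hP4
  -- composition with φm
  have hcomp3φ : (fun p : ℤ×ℤ => g3 p.1 * g3 p.2) ∘ φm = fun p : ℤ×ℤ => G3 p.1 * G3 p.2 := by
    funext ⟨u,v⟩
    simp only [Function.comp, φm, hg3, hG3]
    rw [← Real.exp_add, ← Real.exp_add]
    congr 1
    push_cast
    ring
  have hcomp3ψ : (fun p : ℤ×ℤ => g3 p.1 * g3 p.2) ∘ ψm = fun p : ℤ×ℤ => G2 p.1 * G2 p.2 := by
    funext ⟨u,v⟩
    simp only [Function.comp, ψm, hg3, hG2]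
    rw [← Real.exp_add, ← Real.exp_add]
    congr 1
    push_cast
    ring
  have hzst : ∀ u v : ℤ, ((-1:ℝ))^(u+v) * (-1:ℝ)^(u-v) = 1 := by
    intro u v
    rw [← zpow_add₀ (by norm_num : (-1:ℝ) ≠ 0)]
    have : u + v + (u - v) = 2*u := by ring
    rw [this, zpow_mul]
    norm_num
  have hzst2 : ∀ u v : ℤ, ((-1:ℝ))^(u+v+1) * (-1:ℝ)^(u-v) = -1 := by
    intro u v
    rw [← zpow_add₀ (by norm_num : (-1:ℝ) ≠ 0)]
    have : u + v + 1 + (u - v) = 2*u + 1 := by ring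
    rw [this, zpow_add₀ (by norm_num : (-1:ℝ) ≠ 0), zpow_mul]
    norm_num
  have hcomp4φ : (fun p : ℤ×ℤ => g4 p.1 * g4 p.2) ∘ φm = fun p : ℤ×ℤ => G3 p.1 * G3 p.2 := by
    funext ⟨u,v⟩
    simp only [Function.comp, φm, hg4, hG3]
    have := hzst u v
    rw [show ((-1:ℝ)^(u+v) * Real.exp (-Real.pi * ((u+v:ℤ):ℝ)^2 * y)) *
        ((-1:ℝ)^(u-v) * Real.exp (-Real.pi * ((u-v:ℤ):ℝ)^2 * y))
      = ((-1:ℝ)^(u+v) * (-1:ℝ)^(u-v)) *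
        (Real.exp (-Real.pi * ((u+v:ℤ):ℝ)^2 * y) * Real.exp (-Real.pi * ((u-v:ℤ):ℝ)^2 * y)) by ring,
      this, one_mul, ← Real.exp_add, ← Real.exp_add]
    congr 1
    push_cast
    ring
  have hcomp4ψ : (fun p : ℤ×ℤ => g4 p.1 * g4 p.2) ∘ ψm = fun p : ℤ×ℤ => -(G2 p.1 * G2 p.2) := by
    funext ⟨u,v⟩
    simp only [Function.comp, ψm, hg4, hG2]
    have := hzst2 u v
    rw [show ((-1:ℝ)^(u+v+1) * Real.exp (-Real.pi * ((u+v+1:ℤ):ℝ)^2 * y)) *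
        ((-1:ℝ)^(u-v) * Real.exp (-Real.pi * ((u-v:ℤ):ℝ)^2 * y))
      = ((-1:ℝ)^(u+v+1) * (-1:ℝ)^(u-v)) *
        (Real.exp (-Real.pi * ((u+v+1:ℤ):ℝ)^2 * y) * Real.exp (-Real.pi * ((u-v:ℤ):ℝ)^2 * y)) by ring,
      this, ← Real.exp_add, ← Real.exp_add]
    have harg : -Real.pi * ((u+v+1:ℤ):ℝ)^2 * y + -Real.pi * ((u-v:ℤ):ℝ)^2 * y
      = -Real.pi * ((u:ℝ)+1/2)^2 * (2*y) + -Real.pi * ((v:ℝ)+1/2)^2 * (2*y) := by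
      push_cast
      ring
    rw [harg, Real.exp_add]
    ring
  -- products at 2y
  have hPG3 : Summable (fun p : ℤ×ℤ => G3 p.1 * G3 p.2) :=
    hS3.mul_of_nonneg hS3 (fun n => (Real.exp_pos _).le) (fun n => (Real.exp_pos _).le)
  have hPG2 : Summable (fun p : ℤ×ℤ => G2 p.1 * G2 p.2) :=
    hS2.mul_of_nonneg hS2 (fun n => (Real.exp_pos _).le) (fun n => (Real.exp_pos _).le)
  have hHG3 : HasSum (fun p : ℤ×ℤ => G3 p.1 * G3 p.2) (θ₃ (2*y) * θ₃ (2*y)) :=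
    hS3.hasSum.mul hS3.hasSum hPG3
  have hHG2 : HasSum (fun p : ℤ×ℤ => G2 p.1 * G2 p.2) (θ₂ (2*y) * θ₂ (2*y)) :=
    hS2.hasSum.mul hS2.hasSum hPG2
  constructor
  · -- θ₃ identity
    have h1 : HasSum ((fun p : ℤ×ℤ => g3 p.1 * g3 p.2) ∘ φm) (θ₃ (2*y) * θ₃ (2*y)) := by
      rw [hcomp3φ]; exact hHG3
    have h2 : HasSum ((fun p : ℤ×ℤ => g3 p.1 * g3 p.2) ∘ ψm) (θ₂ (2*y) * θ₂ (2*y)) := by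
      rw [hcomp3ψ]; exact hHG2
    have h3 : HasSum (fun p : ℤ×ℤ => g3 p.1 * g3 p.2) (θ₃ (2*y) * θ₃ (2*y) + θ₂ (2*y) * θ₂ (2*y)) :=
      HasSum.add_isCompl compl_ranges
        (φm_inj.hasSum_range_iff.mpr h1) (ψm_inj.hasSum_range_iff.mpr h2)
    have := hF3.unique h3
    linear_combination this
  · have h1 : HasSum ((fun p : ℤ×ℤ => g4 p.1 * g4 p.2) ∘ φm) (θ₃ (2*y) * θ₃ (2*y)) := by
      rw [hcomp4φ]; exact hHG3
    have h2 : HasSum ((fun p : ℤ×ℤ => g4 p.1 * g4 p.2) ∘ ψm) (-(θ₂ (2*y) * θ₂ (2*y))) := by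
      rw [hcomp4ψ]; exact hHG2.neg
    have h3 : HasSum (fun p : ℤ×ℤ => g4 p.1 * g4 p.2)
        (θ₃ (2*y) * θ₃ (2*y) + -(θ₂ (2*y) * θ₂ (2*y))) :=
      HasSum.add_isCompl compl_ranges
        (φm_inj.hasSum_range_iff.mpr h1) (ψm_inj.hasSum_range_iff.mpr h2)
    have := hF4.unique h3
    linear_combination this

end dup


lemma theta3_complex (y : ℝ) : (θ₃ y : ℂ) = jacobiTheta (y * Complex.I) := by
  rw [show (θ₃ y : ℂ) = ((∑' n : ℤ, Real.exp (-Real.pi * (n : ℝ)^2 * y) : ℝ) : ℂ) from rfl,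
    Complex.ofReal_tsum]
  unfold jacobiTheta
  apply tsum_congr
  intro n
  rw [Complex.ofReal_exp]
  congr 1
  push_cast
  linear_combination -(Real.pi * ((n:ℤ):ℂ)^2 * (y:ℂ)) * Complex.I_sq

lemma theta3_modular : θ₃ (1/Real.sqrt 2) ^ 2 = Real.sqrt 2 * θ₃ (Real.sqrt 2) ^ 2 := by
  have h2 : (0:ℝ) < 2 := by norm_num
  have hs : 0 < Real.sqrt 2 := Real.sqrt_pos.mpr h2
  have him : (((Real.sqrt 2 : ℝ) : ℂ) * Complex.I).im = Real.sqrt 2 := by simp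
  set τ : UpperHalfPlane := UpperHalfPlane.mk (((Real.sqrt 2 : ℝ) : ℂ) * Complex.I)
    (by rw [him]; exact hs) with hτ
  have hmod := jacobiTheta_S_smul τ
  rw [UpperHalfPlane.modular_S_smul] at hmod
  simp only [UpperHalfPlane.coe_mk] at hmod
  have hτc : (τ : ℂ) = ((Real.sqrt 2 : ℝ) : ℂ) * Complex.I := rfl
  have hsne : ((Real.sqrt 2:ℝ):ℂ) ≠ 0 := by exact_mod_cast hs.ne'
  have h1 : (-(τ:ℂ))⁻¹ = ((1/Real.sqrt 2 : ℝ) : ℂ) * Complex.I := by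
    rw [hτc]
    apply inv_eq_of_mul_eq_one_left
    have hI : Complex.I * Complex.I = -1 := Complex.I_mul_I
    have hc : ((1/Real.sqrt 2:ℝ):ℂ) * ((Real.sqrt 2:ℝ):ℂ) = 1 := by
      rw [← Complex.ofReal_mul]
      norm_num
    calc ((1/Real.sqrt 2 : ℝ) : ℂ) * Complex.I * -(((Real.sqrt 2:ℝ):ℂ) * Complex.I)
        = -(((1/Real.sqrt 2:ℝ):ℂ) * ((Real.sqrt 2:ℝ):ℂ)) * (Complex.I * Complex.I) := by ring
      _ = 1 := by rw [hI, hc]; ring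
  have h2' : -Complex.I * (τ:ℂ) = ((Real.sqrt 2 : ℝ) : ℂ) := by
    rw [hτc]
    linear_combination (-((Real.sqrt 2:ℝ):ℂ)) * Complex.I_sq
  rw [h1, h2'] at hmod
  have h3 : (((Real.sqrt 2 : ℝ) : ℂ)) ^ ((1:ℂ)/2) = ((Real.sqrt (Real.sqrt 2) : ℝ) : ℂ) := by
    rw [show ((1:ℂ)/2) = (((1/2:ℝ)):ℂ) by norm_num, ← Complex.ofReal_cpow hs.le,
      ← Real.sqrt_eq_rpow]
  rw [h3, hτc, ← theta3_complex, ← theta3_complex] at hmod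
  have hreal : θ₃ (1/Real.sqrt 2) = Real.sqrt (Real.sqrt 2) * θ₃ (Real.sqrt 2) := by
    exact_mod_cast hmod
  rw [hreal, mul_pow, Real.sq_sqrt hs.le]


noncomputable def cst : ℝ := Real.sqrt (Real.sqrt 2 - 1)

lemma sqrt2_bounds : 1.414213 ≤ Real.sqrt 2 ∧ Real.sqrt 2 ≤ 1.414214 := by
  constructor
  · have := Real.sq_sqrt (by norm_num : (0:ℝ) ≤ 2)
    nlinarith [Real.sqrt_nonneg 2]
  · have := Real.sq_sqrt (by norm_num : (0:ℝ) ≤ 2)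
    nlinarith [Real.sqrt_nonneg 2]

lemma cst_bounds : 0.64 ≤ cst ∧ cst ≤ 0.6437 := by
  have h1 : Real.sqrt 2 - 1 ≥ 0 := by nlinarith [sqrt2_bounds.1]
  have hsq : cst^2 = Real.sqrt 2 - 1 := Real.sq_sqrt h1
  have hnn : 0 ≤ cst := Real.sqrt_nonneg _
  constructor
  · nlinarith [sqrt2_bounds.1]
  · nlinarith [sqrt2_bounds.2]

lemma nat_sq_le_pow4 (n : ℕ) : ((n:ℝ)+1)^2 ≤ 4^n := by
  induction n with
  | zero => norm_num
  | succ m ih =>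
    have : ((m:ℝ)+1+1)^2 ≤ 4*((m:ℝ)+1)^2 := by nlinarith [(Nat.cast_nonneg m : (0:ℝ) ≤ m)]
    push_cast
    calc ((m:ℝ)+1+1)^2 ≤ 4*((m:ℝ)+1)^2 := this
      _ ≤ 4*4^m := by nlinarith
      _ = 4^(m+1) := by ring

lemma pow_sub_pow_le (a b : ℝ) (k : ℕ) (hb : 0 ≤ b) (hba : b ≤ a) (ha1 : a ≤ 1) :
    a^k - b^k ≤ k * a^(k-1) * (a - b) := by
  have key := geom_sum₂_mul a b k
  have hbound : (∑ i ∈ Finset.range k, a ^ i * b ^ (k - 1 - i)) ≤ k * a^(k-1) := by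
    calc (∑ i ∈ Finset.range k, a ^ i * b ^ (k - 1 - i))
        ≤ ∑ i ∈ Finset.range k, a^(k-1) := by
          apply Finset.sum_le_sum
          intro i hi
          have hik : i ≤ k - 1 := by
            have := Finset.mem_range.mp hi; omega
          calc a ^ i * b ^ (k - 1 - i) ≤ a ^ i * a ^ (k - 1 - i) := by
                apply mul_le_mul_of_nonneg_left (pow_le_pow_left₀ hb hba _) (pow_nonneg (hb.trans hba) i)
            _ = a^(k-1) := by rw [← pow_add]; congr 1; omega
      _ = k * a^(k-1) := by rw [Finset.sum_const, Finset.card_range]; ring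
  have hab : 0 ≤ a - b := by linarith
  have h2 := mul_le_mul_of_nonneg_right hbound hab
  rw [key] at h2
  linarith

set_option maxHeartbeats 1000000 in
lemma G_strict_anti (y₁ y₂ : ℝ) (h1 : 1/2 ≤ y₁) (h12 : y₁ < y₂) :
    θ₂ (2*y₂) - cst*θ₃ (2*y₂) < θ₂ (2*y₁) - cst*θ₃ (2*y₁) := by
  have hy1 : 0 < y₁ := by linarith
  have hy2 : 0 < y₂ := by linarith
  set w₁ := Real.exp (-Real.pi*y₁/2) with hw1
  set w₂ := Real.exp (-Real.pi*y₂/2) with hw2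
  have hw1pos : 0 < w₁ := Real.exp_pos _
  have hw2pos : 0 < w₂ := Real.exp_pos _
  have hw21 : w₂ < w₁ := by
    apply Real.exp_lt_exp.2
    nlinarith [Real.pi_pos]
  have hw1lt : w₁ ≤ 0.5602 := by
    have h14 : w₁ ≤ Real.exp (-Real.pi/4) := by
      apply Real.exp_le_exp.2
      nlinarith [Real.pi_pos]
    have hebound : Real.exp (-Real.pi/4) ≤ 0.5602 := by
      rw [show -Real.pi/4 = -(Real.pi/4) by ring, Real.exp_neg]
      have h1 : (1.7853:ℝ) ≤ Real.exp (Real.pi/4) := by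
        have := Real.add_one_le_exp (Real.pi/4)
        nlinarith [Real.pi_gt_d6]
      rw [inv_le_comm₀ (Real.exp_pos _) (by norm_num)]
      linarith
    linarith
  -- per-term exponential identities
  have hexp : ∀ (y : ℝ) (n : ℕ), Real.exp (-Real.pi * ((n:ℝ)+1)^2 * (2*y))
      = Real.exp (-Real.pi*y/2) ^ (4*(n+1)^2) := by
    intro y n
    rw [exp_pow_mul]
    congr 1
    push_cast
    ring
  -- θ₂ difference lower bound
  have hth2 : θ₂ (2*y₁) - θ₂ (2*y₂) ≥ 2*(w₁ - w₂) := by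
    have hs1 := summable2 (2*y₁) (by linarith)
    have hs2 := summable2 (2*y₂) (by linarith)
    have hdiff : θ₂ (2*y₁) - θ₂ (2*y₂)
        = ∑' n : ℤ, (Real.exp (-Real.pi * ((n:ℝ)+1/2)^2 * (2*y₁))
            - Real.exp (-Real.pi * ((n:ℝ)+1/2)^2 * (2*y₂))) := by
      rw [Summable.tsum_sub hs1 hs2]; rfl
    rw [hdiff]
    have hterm : ∀ n : ℤ, 0 ≤ Real.exp (-Real.pi * ((n:ℝ)+1/2)^2 * (2*y₁))
        - Real.exp (-Real.pi * ((n:ℝ)+1/2)^2 * (2*y₂)) := by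
      intro n
      have : Real.exp (-Real.pi * ((n:ℝ)+1/2)^2 * (2*y₂))
          ≤ Real.exp (-Real.pi * ((n:ℝ)+1/2)^2 * (2*y₁)) := by
        apply Real.exp_le_exp.2
        nlinarith [mul_le_mul_of_nonneg_left h12.le
          (mul_nonneg Real.pi_pos.le (sq_nonneg ((n:ℝ)+1/2)))]
      linarith
    have hfin := Summable.sum_le_tsum ({0, -1} : Finset ℤ) (fun i _ => hterm i) (hs1.sub hs2)
    have hev : ∑ i ∈ ({0, -1} : Finset ℤ), (Real.exp (-Real.pi * ((i:ℝ)+1/2)^2 * (2*y₁))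
        - Real.exp (-Real.pi * ((i:ℝ)+1/2)^2 * (2*y₂))) = 2*(w₁-w₂) := by
      rw [Finset.sum_pair (by norm_num), hw1, hw2]
      push_cast
      ring_nf
    linarith [hfin, hev.symm.le]
  -- θ₃ difference upper bound
  have hth3 : θ₃ (2*y₁) - θ₃ (2*y₂) ≤ 2 * ((w₁ - w₂) * (4*w₁^3) * (1 - 4*w₁^12)⁻¹) := by
    have hsN1 := summableN (2*y₁) (by linarith)
    have hsN2 := summableN (2*y₂) (by linarith)
    rw [theta3_eq (2*y₁) (by linarith), theta3_eq (2*y₂) (by linarith)]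
    have hdiff : (1 + 2*∑' n : ℕ, Real.exp (-Real.pi * ((n:ℝ)+1)^2 * (2*y₁)))
        - (1 + 2*∑' n : ℕ, Real.exp (-Real.pi * ((n:ℝ)+1)^2 * (2*y₂)))
        = 2 * ∑' n : ℕ, (Real.exp (-Real.pi * ((n:ℝ)+1)^2 * (2*y₁))
            - Real.exp (-Real.pi * ((n:ℝ)+1)^2 * (2*y₂))) := by
      rw [Summable.tsum_sub hsN1 hsN2]; ring
    rw [hdiff]
    have hr4 : 4*w₁^12 < 1 := by nlinarith [pow_le_pow_left₀ hw1pos.le hw1lt 12]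
    have hgeosum : Summable (fun n : ℕ => (w₁-w₂)*(4*w₁^3) * (4*w₁^12)^n) := by
      apply Summable.mul_left
      apply summable_geometric_of_lt_one (by positivity)
      linarith
    have htermle : ∀ n : ℕ, Real.exp (-Real.pi * ((n:ℝ)+1)^2 * (2*y₁))
        - Real.exp (-Real.pi * ((n:ℝ)+1)^2 * (2*y₂))
        ≤ (w₁-w₂)*(4*w₁^3) * (4*w₁^12)^n := by
      intro n
      rw [hexp y₁ n, hexp y₂ n]
      set k := 4*(n+1)^2 with hk
      have hk1 : 1 ≤ k := by
        have : 0 < k := by positivity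
        omega
      have hstep := pow_sub_pow_le w₁ w₂ k hw2pos.le hw21.le (by linarith : w₁ ≤ 1)
      have hcoef : (k:ℝ) * w₁^(k-1) ≤ (4*w₁^3) * (4*w₁^12)^n := by
        have hkk : (k:ℝ) = 4*((n:ℝ)+1)^2 := by rw [hk]; push_cast; ring
        have hsplit : w₁^(k-1) = w₁^3 * w₁^(12*n) * w₁^(4*n*(n-1)) := by
          rw [← pow_add, ← pow_add]
          congr 1
          rw [hk]
          rcases n with _ | m
          · norm_num
          · push_cast; ring_nf; omega
        rw [hkk, hsplit]
        have h4n : ((n:ℝ)+1)^2 * w₁^(4*n*(n-1)) ≤ 4^n := by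
          calc ((n:ℝ)+1)^2 * w₁^(4*n*(n-1)) ≤ ((n:ℝ)+1)^2 * 1 := by
                apply mul_le_mul_of_nonneg_left _ (by positivity)
                exact pow_le_one₀ hw1pos.le (by linarith)
            _ = ((n:ℝ)+1)^2 := by ring
            _ ≤ 4^n := nat_sq_le_pow4 n
        calc 4*((n:ℝ)+1)^2 * (w₁^3 * w₁^(12*n) * w₁^(4*n*(n-1)))
            = (4*w₁^3) * ((((n:ℝ)+1)^2 * w₁^(4*n*(n-1))) * w₁^(12*n)) := by ring
          _ ≤ (4*w₁^3) * (4^n * w₁^(12*n)) := by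
              apply mul_le_mul_of_nonneg_left _ (by positivity)
              apply mul_le_mul_of_nonneg_right h4n (by positivity)
          _ = (4*w₁^3) * (4*w₁^12)^n := by rw [mul_pow, pow_mul]
      have hwd : 0 ≤ w₁ - w₂ := by linarith
      calc w₁^k - w₂^k ≤ (k:ℝ) * w₁^(k-1) * (w₁-w₂) := hstep
        _ ≤ (4*w₁^3) * (4*w₁^12)^n * (w₁-w₂) := by
            apply mul_le_mul_of_nonneg_right hcoef hwd
        _ = (w₁-w₂)*(4*w₁^3) * (4*w₁^12)^n := by ring
    have hsum := Summable.tsum_le_tsum htermle (hsN1.sub hsN2) hgeosum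
    have hgeoval : ∑' n : ℕ, (w₁-w₂)*(4*w₁^3) * (4*w₁^12)^n
        = (w₁-w₂)*(4*w₁^3) * (1-4*w₁^12)⁻¹ := by
      rw [tsum_mul_left, tsum_geometric_of_lt_one (by positivity) (by linarith)]
    rw [hgeoval] at hsum
    linarith
  -- combine
  have hcb := cst_bounds
  have hr4 : (0:ℝ) < 1 - 4*w₁^12 := by nlinarith [pow_le_pow_left₀ hw1pos.le hw1lt 12]
  have hkey : cst * (2 * ((w₁ - w₂) * (4*w₁^3) * (1 - 4*w₁^12)⁻¹)) < 2*(w₁ - w₂) := by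
    have hd : 0 < w₁ - w₂ := by linarith
    have h3 : w₁^3 ≤ 0.5602^3 := pow_le_pow_left₀ hw1pos.le hw1lt 3
    have h12p : w₁^12 ≤ 0.5602^12 := pow_le_pow_left₀ hw1pos.le hw1lt 12
    have heq : cst * (2 * ((w₁ - w₂) * (4*w₁^3) * (1 - 4*w₁^12)⁻¹))
        = (cst * (8*w₁^3) * (w₁-w₂)) / (1 - 4*w₁^12) := by
      rw [div_eq_mul_inv]; ring
    rw [heq, div_lt_iff₀ hr4]
    have hA : cst * (8*w₁^3) ≤ 0.906 := by
      nlinarith [hcb.1, hcb.2, pow_nonneg hw1pos.le 3]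
    have hB : (1.99:ℝ) ≤ 2*(1 - 4*w₁^12) := by nlinarith [h12p]
    nlinarith [mul_le_mul_of_nonneg_right hA hd.le, mul_le_mul_of_nonneg_right hB hd.le]
  have hθ3d : cst * (θ₃ (2*y₁) - θ₃ (2*y₂)) < 2*(w₁-w₂) := by
    calc cst * (θ₃ (2*y₁) - θ₃ (2*y₂)) ≤ cst * (2 * ((w₁ - w₂) * (4*w₁^3) * (1 - 4*w₁^12)⁻¹)) := by
          apply mul_le_mul_of_nonneg_left hth3 (by linarith [hcb.1])
      _ < 2*(w₁-w₂) := hkey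
  linarith

lemma sqrt2_pos : 0 < Real.sqrt 2 := by nlinarith [sqrt2_bounds.1]
lemma sqrt2_sq : Real.sqrt 2 ^ 2 = 2 := Real.sq_sqrt (by norm_num)
lemma cst_sq : cst ^ 2 = Real.sqrt 2 - 1 :=
  Real.sq_sqrt (by nlinarith [sqrt2_bounds.1])
lemma cst_pos : 0 < cst := by nlinarith [cst_bounds.1]

lemma two_inv_sqrt2 : 2 * (1 / Real.sqrt 2) = Real.sqrt 2 := by
  rw [mul_one_div, div_eq_iff (ne_of_gt sqrt2_pos)]
  nlinarith [sqrt2_sq]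

/-- sq-root extraction for positives -/
lemma eq_of_sq_eq {a b : ℝ} (ha : 0 < a) (hb : 0 < b) (h : a^2 = b^2) : a = b := by
  nlinarith [sq_nonneg (a - b), sq_nonneg (a+b)]

lemma theta2_eq_cst_theta3 (y : ℝ) (hy : 0 < y)
    (h : θ₂ (2*y)^2 = (Real.sqrt 2 - 1) * θ₃ (2*y)^2) :
    θ₂ (2*y) = cst * θ₃ (2*y) := by
  have h2y : 0 < 2*y := by linarith
  apply eq_of_sq_eq (theta2_pos _ h2y) (mul_pos cst_pos (theta3_pos _ h2y))
  rw [mul_pow, cst_sq]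
  exact h

lemma G_zero : θ₂ (2*(1/Real.sqrt 2)) = cst * θ₃ (2*(1/Real.sqrt 2)) := by
  have hy : (0:ℝ) < 1/Real.sqrt 2 := by positivity
  apply theta2_eq_cst_theta3 _ hy
  have hdup := (dup_identities (1/Real.sqrt 2) hy).1
  rw [two_inv_sqrt2] at hdup ⊢
  have hmod := theta3_modular
  have hs2 := sqrt2_sq
  have key : Real.sqrt 2 * θ₂ (Real.sqrt 2)^2
      = Real.sqrt 2 * ((Real.sqrt 2 - 1) * θ₃ (Real.sqrt 2)^2) := by
    linear_combination Real.sqrt 2 * hmod - Real.sqrt 2 * hdup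
  exact mul_left_cancel₀ (ne_of_gt sqrt2_pos) key

set_option maxHeartbeats 1000000 in
lemma theta_ratio_ne (y : ℝ) (hy : 0 < y) (hne : y ≠ 1/Real.sqrt 2) :
    θ₄ y ^ 2 ≠ (Real.sqrt 2 - 1) * θ₃ y ^ 2 := by
  rcases lt_or_ge y (1/2) with hcase | hcase
  · -- region I : strict inequality
    apply ne_of_lt
    obtain ⟨h4lo, h4hi⟩ := theta4_bounds y hy
    have h3lo := theta3_lower y hy
    set q := Real.exp (-Real.pi*y) with hq
    have hq1 : q < 1 := by
      rw [hq, Real.exp_lt_one_iff]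
      nlinarith [Real.pi_pos]
    have hqlb : 0.135 ≤ q := by
      have h1 : Real.exp (-2 : ℝ) ≤ q := by
        rw [hq]
        apply Real.exp_le_exp.2
        nlinarith [Real.pi_lt_d2]
      have h7 : Real.exp 2 ≤ 7.3890561 := by
        rw [show (2:ℝ) = 1+1 by norm_num, Real.exp_add]
        nlinarith [Real.exp_one_lt_d9, Real.exp_pos 1]
      have h2 : (0.135:ℝ) ≤ Real.exp (-2:ℝ) := by
        rw [show (-2:ℝ) = -(2:ℝ) by norm_num, Real.exp_neg,
          le_inv_comm₀ (by norm_num) (Real.exp_pos _)]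
        linarith
      linarith
    have hs1 := sqrt2_bounds.1
    have h3pos : (0:ℝ) < 1 + 2*q := by linarith
    have hstep : θ₄ y ^2 < (Real.sqrt 2 - 1) * (1+2*q)^2 := by
      rcases le_or_gt (θ₄ y) 0 with hsgn | hsgn
      · have : θ₄ y ^2 ≤ (1-2*q)^2 := by nlinarith
        nlinarith
      · have hup : θ₄ y ^2 ≤ (1-2*q+2*q^4)^2 := by
          nlinarith [pow_pos (lt_of_lt_of_le (by norm_num) hqlb) 4]
        rcases le_or_gt q 0.5 with hq5 | hq5
        · -- q ≤ 1/2
          have hq2 : q^2 ≤ 0.25 := by nlinarith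
          have hx1 : 1-2*q+2*q^4 ≤ 1-2*q+0.5*q^2 := by
            nlinarith [mul_le_mul_of_nonneg_left hq2 (sq_nonneg q)]
          have hx0 : (0:ℝ) ≤ 1-2*q+2*q^4 := by nlinarith [pow_pos (lt_of_lt_of_le (by norm_num) hqlb) 4]
          have hlin : 1-2*q+0.5*q^2 < 0.64359*(1+2*q) := by
            nlinarith [mul_nonneg (by linarith : (0:ℝ) ≤ q - 0.135) (by linarith : (0:ℝ) ≤ 0.5 - q)]
          have hsq : (1-2*q+2*q^4)^2 < (0.64359*(1+2*q))^2 := by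
            apply sq_lt_sq' _ (by linarith)
            nlinarith
          have hcoef : (0.64359:ℝ)^2 ≤ Real.sqrt 2 - 1 := by nlinarith
          nlinarith [sq_nonneg (1+2*q)]
        · -- q > 1/2
          have hq3 : q^3 ≤ 1 := pow_le_one₀ (by linarith) hq1.le
          have hb1 : 1-2*q+2*q^4 ≤ 1 := by
            nlinarith [mul_le_mul_of_nonneg_left hq3 (by linarith : (0:ℝ) ≤ q)]
          have hb2 : -1 ≤ 1-2*q+2*q^4 := by nlinarith [pow_pos (lt_of_lt_of_le (by norm_num) hqlb) 4]
          have : (1-2*q+2*q^4)^2 ≤ 1 := by nlinarith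
          nlinarith [sq_nonneg (1+2*q)]
    have hmono : (Real.sqrt 2 - 1) * (1+2*q)^2 ≤ (Real.sqrt 2 - 1) * θ₃ y ^2 := by
      apply mul_le_mul_of_nonneg_left _ (by linarith)
      nlinarith [theta3_pos y hy]
    linarith
  · -- region II : via strict monotonicity of G
    intro hcontra
    have hdup := dup_identities y hy
    have hs2 := sqrt2_sq
    have hkey : Real.sqrt 2 * θ₂ (2*y)^2
        = Real.sqrt 2 * ((Real.sqrt 2 - 1) * θ₃ (2*y)^2) := by
      linear_combination hdup.2 - hcontra - (Real.sqrt 2 - 1) * hdup.1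
        - θ₃ (2*y)^2 * hs2
    have hB : θ₂ (2*y)^2 = (Real.sqrt 2 - 1) * θ₃ (2*y)^2 :=
      mul_left_cancel₀ (ne_of_gt sqrt2_pos) hkey
    have hGy : θ₂ (2*y) - cst * θ₃ (2*y) = 0 := by
      rw [theta2_eq_cst_theta3 y hy hB]; ring
    have hG0 : θ₂ (2*(1/Real.sqrt 2)) - cst * θ₃ (2*(1/Real.sqrt 2)) = 0 := by
      rw [G_zero]; ring
    have hhalf : (1:ℝ)/2 ≤ 1/Real.sqrt 2 := by
      rw [div_le_div_iff₀ (by norm_num) sqrt2_pos]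
      nlinarith [sqrt2_bounds.2]
    rcases lt_or_gt_of_ne hne with hlt | hgt
    · have := G_strict_anti y (1/Real.sqrt 2) hcase hlt
      rw [hGy, hG0] at this
      exact lt_irrefl 0 this
    · have := G_strict_anti (1/Real.sqrt 2) y hhalf hgt
      rw [hGy, hG0] at this
      exact lt_irrefl 0 this

lemma f2_bounds (y : ℝ) (hy : 0 < y) (hne : y ≠ 1/Real.sqrt 2) :
    0 ≤ f₂ y ∧ f₂ y < β := by
  set X := θ₃ y ^ 2 with hX
  set Z := θ₄ y ^ 2 with hZ
  have hXpos : 0 < X := pow_pos (theta3_pos y hy) 2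
  have hZnn : 0 ≤ Z := sq_nonneg _
  have hZX : Z ≤ X := by
    have habs := abs_theta4_le y hy
    have := pow_le_pow_left₀ (abs_nonneg (θ₄ y)) habs 2
    rwa [sq_abs] at this
  have hdup := dup_identities y hy
  have h2y : 0 < 2*y := by linarith
  have hA : θ₃ (2*y)^2 = (X + Z)/2 := by
    have h1 := hdup.1; have h2 := hdup.2
    linarith
  have hB : θ₂ (2*y)^2 = (X - Z)/2 := by
    have h1 := hdup.1; have h2 := hdup.2
    linarith
  have hXZpos : 0 < X + Z := by linarith
  have hf2 : f₂ y = Z * (X - Z) / (4 * X * (X+Z)) := by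
    rw [show f₂ y = θ₂ (2*y)^2 * θ₄ y ^ 2 / (4 * θ₃ y ^ 2 * θ₃ (2*y)^2) from rfl, hB, hA,
      ← hX, ← hZ]
    rw [div_eq_div_iff (by nlinarith) (by nlinarith)]
    ring
  constructor
  · rw [hf2]
    apply div_nonneg
    · apply mul_nonneg hZnn; linarith
    · positivity
  · have hne2 := theta_ratio_ne y hy hne
    have hsub : Z - (Real.sqrt 2 - 1)*X ≠ 0 := by
      rw [sub_ne_zero]
      exact hne2
    have hsqpos : 0 < (Z - (Real.sqrt 2 - 1)*X)^2 := by
      have habs : 0 < |Z - (Real.sqrt 2 - 1)*X| := abs_pos.mpr hsub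
      calc (0:ℝ) < |Z - (Real.sqrt 2 - 1)*X|^2 := pow_pos habs 2
        _ = (Z - (Real.sqrt 2 - 1)*X)^2 := sq_abs _
    rw [hf2, show β = (3 - 2*Real.sqrt 2)/4 from rfl, div_lt_iff₀ (by positivity)]
    nlinarith [hsqpos, sqrt2_sq, sq_nonneg X]

end BW16aux

/-- The 2-modular secrecy function of the Barnes–Wall lattice BW₁₆ attains a strict global
maximum on (0,∞) at y = 1/√2. -/
theorem BW16_secrecy_max (y : ℝ) (hy : 0 < y) (hne : y ≠ 1 / Real.sqrt 2) :
    (1 - 16 * f₂ y - 256 * f₂ y ^ 3 + 256 * f₂ y ^ 4)⁻¹ <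
      (1 - 16 * β - 256 * β ^ 3 + 256 * β ^ 4)⁻¹ := by
  obtain ⟨hx0, hxb⟩ := BW16aux.f2_bounds y hy hne
  set x := f₂ y with hxdef
  have hs := BW16aux.sqrt2_bounds
  have hbl : 0.042893 ≤ β := by rw [show β = (3 - 2*Real.sqrt 2)/4 from rfl]; nlinarith [hs.2]
  have hbu : β ≤ 0.0428935 := by rw [show β = (3 - 2*Real.sqrt 2)/4 from rfl]; nlinarith [hs.1]
  have hb0 : (0:ℝ) ≤ β := by linarith
  have hb3 : β^3 ≤ 0.0428935^3 := pow_le_pow_left₀ hb0 hbu 3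
  have hb4nn : (0:ℝ) ≤ β^4 := by positivity
  have hgβ : 0 < 1 - 16 * β - 256 * β ^ 3 + 256 * β ^ 4 := by nlinarith
  have hgx : 1 - 16 * β - 256 * β ^ 3 + 256 * β ^ 4 < 1 - 16 * x - 256 * x ^ 3 + 256 * x ^ 4 := by
    have hd : 0 < β - x := by linarith
    have hxu : x ≤ 0.0428935 := by linarith
    have key : (β+x)*(β^2+x^2) ≤ 0.00032 := by nlinarith
    have hmid : 0 ≤ (β-x)*(β^2+β*x+x^2) := by
      apply mul_nonneg hd.le
      nlinarith [sq_nonneg β, sq_nonneg x, mul_nonneg hb0 hx0]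
    nlinarith [mul_le_mul_of_nonneg_left key hd.le, hmid, hd]
  exact inv_strictAnti₀ hgβ hgx
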